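/- Last-iterate bound for iBPG: under the standing assumptions, for the iBPG iterates, any k ≥ 0 and any x ∈ dom P ∩ dom φ, F(x̃^{k+1}) − F(x) ≤ (1/(k+1))·( L·D_φ(x, x^0) + Σ_{i=0}^{k} ( η_i·‖x̃^{i+1}‖ + η_i·‖x‖ + L·μ_i + ν_i + i·ξ_i ) ), where ξ_i := η_i·‖x̃^{i+1} − x̃^i‖ + L·(μ_i + μ_{i−1}) + ν_i. -/

import Mathlib

open Filter Topology RealInnerProductSpace

/-- The Bregman distance associated with the kernel `φ` whose gradient map is `gφ`. -/
noncomputable def breg {E : Type*} [NormedAddCommGroup E] [InnerProductSpace ℝ E]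
    (φ : E → ℝ) (gφ : E → E) (x y : E) : ℝ :=
  φ x - φ y - ⟪gφ y, x - y⟫

/-- The ν-subdifferential of `P` (a proper function with effective domain `domP`) at `x`. -/
def nuSubdiff {E : Type*} [NormedAddCommGroup E] [InnerProductSpace ℝ E]
    (P : E → ℝ) (domP : Set E) (ν : ℝ) (x : E) : Set E :=
  {d : E | ∀ u ∈ domP, P x + ⟪d, u - x⟫ - ν ≤ P u}

open Classical in
/-- Extension of a real-valued function with effective domain `dom` to an `EReal`-valued
function taking the value `⊤` outside `dom`. -/
noncomputable def extFun {E : Type*} (g : E → ℝ) (dom : Set E) : E → EReal :=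
  fun x => if x ∈ dom then (g x : EReal) else ⊤

/-- `φ` (with effective domain `domφ` and gradient map `gφ`) is essentially smooth. -/
def EssentiallySmooth {E : Type*} [NormedAddCommGroup E] [InnerProductSpace ℝ E]
    [FiniteDimensional ℝ E] (φ : E → ℝ) (domφ : Set E) (gφ : E → E) : Prop :=
  (interior domφ).Nonempty ∧
  (∀ x ∈ interior domφ, HasGradientAt φ (gφ x) x) ∧
  ∀ (u : ℕ → E) (u₀ : E), (∀ n, u n ∈ interior domφ) →
    Tendsto u atTop (𝓝 u₀) → u₀ ∈ frontier (interior domφ) →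
    Tendsto (fun n => ‖gφ (u n)‖) atTop atTop

/-- The standing assumptions (Assumption A) for the problem `inf {P x + f x : x ∈ Q}`. -/
structure Standing {E : Type*} [NormedAddCommGroup E] [InnerProductSpace ℝ E]
    [FiniteDimensional ℝ E] (Q domφ domP domf X : Set E)
    (φ P f : E → ℝ) (gφ gf : E → E) (L : ℝ) : Prop where
  hQclosed : IsClosed Q
  hQconv : Convex ℝ Q
  hQint : (interior Q).Nonempty
  hφconv : ConvexOn ℝ domφ φ
  hφstrict : StrictConvexOn ℝ (interior domφ) φ
  hφsmooth : EssentiallySmooth φ domφ gφ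
  hφQ : closure domφ = Q
  hPne : domP.Nonempty
  hPconv : ConvexOn ℝ domP P
  hPclosed : LowerSemicontinuous (extFun P domP)
  hPQ : (domP ∩ interior Q).Nonempty
  hfconv : ConvexOn ℝ domf f
  hfclosed : LowerSemicontinuous (extFun f domf)
  hfdom : domφ ⊆ domf
  hfgrad : ∀ x ∈ interior domφ, HasGradientAt f (gf x) x
  hXclosed : IsClosed X
  hXconv : Convex ℝ X
  hXsup : domP ∩ domφ ⊆ X
  hLnn : 0 ≤ L
  hrel : ∀ u ∈ interior domφ ∩ X, ∀ v ∈ domφ ∩ X,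
    f v ≤ f u + ⟪gf u, v - u⟫ + L * breg φ gφ v u

/-- The iBPG iterates with inexactness tolerance sequences `η`, `μ`, `ν`. -/
structure IBPGIter {E : Type*} [NormedAddCommGroup E] [InnerProductSpace ℝ E]
    [FiniteDimensional ℝ E] (domφ domP X : Set E) (φ P : E → ℝ) (gφ gf : E → E) (L : ℝ)
    (η μ ν : ℕ → ℝ) (x xt : ℕ → E) : Prop where
  hη : ∀ k, 0 ≤ η k
  hμ : ∀ k, 0 ≤ μ k
  hν : ∀ k, 0 ≤ ν k
  hx : ∀ k, x k ∈ X ∩ interior domφ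
  hxt : ∀ k, xt k ∈ domP ∩ domφ
  hinex : ∀ k, ∃ d ∈ nuSubdiff P domP (ν k) (xt (k+1)),
    ‖d + gf (x k) + L • (gφ (x (k+1)) - gφ (x k))‖ ≤ η k
  hdist : ∀ k, breg φ gφ (xt (k+1)) (x (k+1)) ≤ μ k

/-! Every step satisfies, for each `u ∈ dom P ∩ dom φ`, the one-step inequality
`F(x̃^{i+1}) − F(u) ≤ η_i ‖x̃^{i+1} − u‖ + L (D_φ(u, x^i) − D_φ(u, x^{i+1})) + L μ_i + ν_i`:
add the `ν_i`-subgradient inequality of `P`, relative smoothness and convexity of `f`, and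
the four-point identity of the Bregman distance. With `u = x` the right-hand sides telescope;
with `u = x̃^i` the values `F(x̃^{i+1})` increase by at most `ξ_{i+1}` per step, and such an
almost decreasing sequence satisfies `(k+1) a_k ≤ ∑_{i ≤ k} (a_i + i ξ_i)`. -/

section

variable {E : Type*} [NormedAddCommGroup E] [InnerProductSpace ℝ E]

theorem ConvexOn.add_inner_sub_le_of_hasGradientAt [CompleteSpace E] {s : Set E} {g : E → ℝ}
    {x y d : E}
    (hg : ConvexOn ℝ s g) (hx : x ∈ s) (hy : y ∈ s) (hd : HasGradientAt g d x) :
    g x + ⟪d, y - x⟫ ≤ g y := by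
  set ψ := g ∘ AffineMap.lineMap (k := ℝ) x y
  have hψ : ConvexOn ℝ (AffineMap.lineMap x y ⁻¹' s) ψ := hg.comp_affineMap _
  have hψ' : HasDerivAt ψ ⟪d, y - x⟫ 0 := by
    have hd' : HasFDerivAt g (InnerProductSpace.toDual ℝ E d) (AffineMap.lineMap x y (0 : ℝ)) := by
      simpa using hd.hasFDerivAt
    simpa using hd'.comp_hasDerivAt 0 AffineMap.hasDerivAt_lineMap
  have := hψ.le_slope_of_hasDerivAt (x := 0) (y := 1) (by simpa using hx) (by simpa using hy)
    one_pos hψ'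
  rw [slope_def_field] at this
  simp only [ψ, Function.comp_apply, AffineMap.lineMap_apply_zero, AffineMap.lineMap_apply_one,
    sub_zero, div_one] at this
  linarith

theorem breg_nonneg [CompleteSpace E] {s : Set E} {φ : E → ℝ} {gφ : E → E} {y w : E}
    (hφ : ConvexOn ℝ s φ) (hy : y ∈ s) (hw : w ∈ s) (hgrad : HasGradientAt φ (gφ y) y) :
    0 ≤ breg φ gφ w y := by
  have := hφ.add_inner_sub_le_of_hasGradientAt hy hw hgrad
  rw [breg]
  linarith

theorem breg_four_point (φ : E → ℝ) (gφ : E → E) (y y' u w : E) :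
    ⟪gφ y' - gφ y, w - u⟫ =
      breg φ gφ u y' - breg φ gφ u y + breg φ gφ w y - breg φ gφ w y' := by
  simp only [breg, inner_sub_left, inner_sub_right]
  ring

theorem succ_mul_le_sum_add_sum_mul {a ξ : ℕ → ℝ} (hinc : ∀ i, a (i + 1) ≤ a i + ξ (i + 1))
    (k : ℕ) : ((k : ℝ) + 1) * a k ≤ ∑ i ∈ Finset.range (k + 1), (a i + i * ξ i) := by
  induction k with
  | zero => simp
  | succ k ih =>
    rw [Finset.sum_range_succ]
    have := mul_le_mul_of_nonneg_left (hinc k) (by positivity : (0 : ℝ) ≤ k + 1)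
    push_cast
    linarith

theorem sum_le_of_le_add_sub_succ {a b e : ℕ → ℝ} {n : ℕ} (hen : 0 ≤ e n)
    (hab : ∀ i, a i ≤ b i + (e i - e (i + 1))) :
    ∑ i ∈ Finset.range n, a i ≤ e 0 + ∑ i ∈ Finset.range n, b i := by
  have hsum := Finset.sum_le_sum fun i (_ : i ∈ Finset.range n) => hab i
  rw [Finset.sum_add_distrib, Finset.sum_range_sub'] at hsum
  linarith

theorem succ_mul_le_of_le_add_sub_succ {a b e ξ : ℕ → ℝ} (he : ∀ i, 0 ≤ e i)
    (hab : ∀ i, a i ≤ b i + (e i - e (i + 1))) (hinc : ∀ i, a (i + 1) ≤ a i + ξ (i + 1))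
    (k : ℕ) : ((k : ℝ) + 1) * a k ≤ e 0 + ∑ i ∈ Finset.range (k + 1), (b i + i * ξ i) :=
  calc ((k : ℝ) + 1) * a k
      ≤ ∑ i ∈ Finset.range (k + 1), a i + ∑ i ∈ Finset.range (k + 1), i * ξ i := by
        rw [← Finset.sum_add_distrib]; exact succ_mul_le_sum_add_sum_mul hinc k
    _ ≤ e 0 + ∑ i ∈ Finset.range (k + 1), b i + ∑ i ∈ Finset.range (k + 1), i * ξ i := by
        gcongr; exact sum_le_of_le_add_sub_succ (he _) hab
    _ = e 0 + ∑ i ∈ Finset.range (k + 1), (b i + i * ξ i) := by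
        rw [Finset.sum_add_distrib, add_assoc]

/-- The paper's `ξ_i`; the `if` encodes the convention `μ_{−1} := D_φ(x̃^0, x^0)`. -/
noncomputable def incrementBound (φ : E → ℝ) (gφ : E → E) (L : ℝ) (η μ ν : ℕ → ℝ)
    (x xt : ℕ → E) (i : ℕ) : ℝ :=
  η i * ‖xt (i+1) - xt i‖
    + L * (μ i + (if i = 0 then breg φ gφ (xt 0) (x 0) else μ (i-1))) + ν i

variable [FiniteDimensional ℝ E] {Q domφ domP domf X : Set E} {φ P f : E → ℝ} {gφ gf : E → E}
  {L : ℝ} {η μ ν : ℕ → ℝ} {x xt : ℕ → E}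

theorem Standing.breg_nonneg (hstand : Standing Q domφ domP domf X φ P f gφ gf L) {w y : E}
    (hw : w ∈ domφ) (hy : y ∈ interior domφ) : 0 ≤ breg φ gφ w y :=
  _root_.breg_nonneg hstand.hφconv (interior_subset hy) hw (hstand.hφsmooth.2.1 y hy)

theorem Standing.sub_le_inner_add_breg (hstand : Standing Q domφ domP domf X φ P f gφ gf L)
    {y v u : E} (hy : y ∈ interior domφ ∩ X) (hv : v ∈ domφ ∩ X) (hu : u ∈ domφ) :
    f v - f u ≤ ⟪gf y, v - u⟫ + L * breg φ gφ v y := by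
  have hupper := hstand.hrel y hy v hv
  have hlower : f y + ⟪gf y, u - y⟫ ≤ f u :=
    hstand.hfconv.add_inner_sub_le_of_hasGradientAt (hstand.hfdom (interior_subset hy.1))
      (hstand.hfdom hu) (hstand.hfgrad y hy.1)
  have hsplit : ⟪gf y, v - u⟫ = ⟪gf y, v - y⟫ - ⟪gf y, u - y⟫ := by
    rw [← inner_sub_right, sub_sub_sub_cancel_right]
  linarith

namespace IBPGIter

theorem objective_sub_le (hiter : IBPGIter domφ domP X φ P gφ gf L η μ ν x xt)
    (hstand : Standing Q domφ domP domf X φ P f gφ gf L) (i : ℕ) {u : E} (hu : u ∈ domP ∩ domφ) :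
    (P (xt (i+1)) + f (xt (i+1))) - (P u + f u) ≤
      η i * ‖xt (i+1) - u‖ + (L * breg φ gφ u (x i) - L * breg φ gφ u (x (i+1)))
        + L * μ i + ν i := by
  obtain ⟨d, hd, hΔ⟩ := hiter.hinex i
  have hP : P (xt (i+1)) - P u ≤ ⟪d, xt (i+1) - u⟫ + ν i := by
    have : P (xt (i+1)) + ⟪d, u - xt (i+1)⟫ - ν i ≤ P u := hd u hu.1
    rw [← neg_sub (xt (i+1)) u, inner_neg_right] at this
    linarith
  have hf := hstand.sub_le_inner_add_breg ⟨(hiter.hx i).2, (hiter.hx i).1⟩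
    ⟨(hiter.hxt (i+1)).2, hstand.hXsup (hiter.hxt (i+1))⟩ hu.2
  have hΔ' := (real_inner_le_norm _ (xt (i+1) - u)).trans
    (mul_le_mul_of_nonneg_right hΔ (norm_nonneg _))
  rw [inner_add_left, inner_add_left, real_inner_smul_left,
    breg_four_point φ gφ (x i) (x (i+1)) u (xt (i+1))] at hΔ'
  have hμ := mul_le_mul_of_nonneg_left (hiter.hdist i) hstand.hLnn
  linarith

theorem objective_succ_sub_le (hiter : IBPGIter domφ domP X φ P gφ gf L η μ ν x xt)
    (hstand : Standing Q domφ domP domf X φ P f gφ gf L) (i : ℕ) :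
    (P (xt (i+1)) + f (xt (i+1))) - (P (xt i) + f (xt i)) ≤
      incrementBound φ gφ L η μ ν x xt i := by
  have hstep := hiter.objective_sub_le hstand i (hiter.hxt i)
  have hprev : breg φ gφ (xt i) (x i) ≤ if i = 0 then breg φ gφ (xt 0) (x 0) else μ (i-1) := by
    cases i with
    | zero => simp
    | succ j => simpa using hiter.hdist j
  have hprev' := mul_le_mul_of_nonneg_left hprev hstand.hLnn
  have hnn := mul_nonneg hstand.hLnn (hstand.breg_nonneg (hiter.hxt i).2 (hiter.hx (i+1)).2)
  rw [incrementBound]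
  linarith

end IBPGIter

end

/-- **Last-iterate bound for iBPG** (Theorem 3.1(i), second bound). Under the standing
assumptions, for the iBPG iterates, any `k ≥ 0` and any `x ∈ dom P ∩ dom φ`,
`F(x̃^{k+1}) − F(x) ≤
  (1/(k+1)) (L D_φ(x, x^0) + Σ_{i=0}^k (η_i ‖x̃^{i+1}‖ + η_i ‖x‖ + L μ_i + ν_i + i ξ_i))`,
where `ξ_i := η_i ‖x̃^{i+1} − x̃^i‖ + L(μ_i + μ_{i−1}) + ν_i`, with the convention
`μ_{−1} := D_φ(x̃^0, x^0)`, and `F = P + f`. -/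
theorem iBPG_last_iterate_bound
    {E : Type*} [NormedAddCommGroup E] [InnerProductSpace ℝ E] [FiniteDimensional ℝ E]
    (Q domφ domP domf X : Set E) (φ P f : E → ℝ) (gφ gf : E → E) (L : ℝ)
    (hstand : Standing Q domφ domP domf X φ P f gφ gf L)
    (η μ ν : ℕ → ℝ) (x xt : ℕ → E)
    (hiter : IBPGIter domφ domP X φ P gφ gf L η μ ν x xt) :
    ∀ (k : ℕ), ∀ xx ∈ domP ∩ domφ,
      (P (xt (k+1)) + f (xt (k+1))) - (P xx + f xx) ≤
        ((k : ℝ) + 1)⁻¹ * (L * breg φ gφ xx (x 0)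
          + ∑ i ∈ Finset.range (k+1),
              (η i * ‖xt (i+1)‖ + η i * ‖xx‖ + L * μ i + ν i
                + (i : ℝ) * (η i * ‖xt (i+1) - xt i‖
                    + L * (μ i + (if i = 0 then breg φ gφ (xt 0) (x 0) else μ (i-1)))
                    + ν i))) := by
  intro k xx hxx
  rw [le_inv_mul_iff₀ (by positivity)]
  refine succ_mul_le_of_le_add_sub_succ
    (a := fun i => P (xt (i+1)) + f (xt (i+1)) - (P xx + f xx))
    (b := fun i => η i * ‖xt (i+1)‖ + η i * ‖xx‖ + L * μ i + ν i)
    (ξ := incrementBound φ gφ L η μ ν x xt)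
    (fun i => mul_nonneg hstand.hLnn (hstand.breg_nonneg hxx.2 (hiter.hx i).2))
    (fun i => ?_) (fun i => ?_) k
  · have hnorm := mul_le_mul_of_nonneg_left (norm_sub_le (xt (i+1)) xx) (hiter.hη i)
    have := hiter.objective_sub_le hstand i hxx
    linarith
  · have := hiter.objective_succ_sub_le hstand (i+1)
    linarith
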